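/- arXiv:0804.1154 — 4 statements merged into one kernel-verified Lean document; each statement's English description precedes it below -/
import Mathlib

section
/- For integers k ≥ 1 and n ≥ 2, the function f(v) = (1 + Σᵢ vᵢ)^n / [(1 + Σᵢ₌₁ⁿ vᵢ + k(1 + Σᵢ₌₂ⁿ vᵢ)) · (1 + Σᵢ₌₁ⁿ vᵢ + (1+k)(1 + Σᵢ₌₂ⁿ vᵢ))^n] on the standard n-simplex {v ∈ ℝⁿ : vᵢ ≥ 0, Σvᵢ ≤ 1} attains its maximum value 2^n / ((2+k)(3+k)^n) at the point (1,0,…,0). -/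
/-!
Put `a = 1 + Σ vᵢ ∈ [1, 2]` and `b = 1 + Σ_{i ≥ 2} vᵢ ≥ 1`, so that
`f v = aⁿ / ((a + k b)(a + (1 + k) b)ⁿ)`. The denominator increases with `b`, so one may take
`b = 1`. Then, with `r = a (3 + k) ≤ R = 2 (a + 1 + k)`, the bound `f ≤ 2ⁿ / ((2 + k)(3 + k)ⁿ)`
reads `rⁿ (2 + k) ≤ Rⁿ (a + k)`, and since `r ≤ R` and `n ≥ 2` it reduces to the cubic
inequality `r² (2 + k) ≤ R² (a + k)` on `0 ≤ a ≤ 2`, with equality at `a = 2`.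
-/

open Finset

section SimplexBound

variable {a b k : ℝ}

theorem sq_mul_le_sq_mul_of_le_two (hk : 1 ≤ k) (ha : 0 ≤ a) (ha2 : a ≤ 2) :
    (a * (3 + k)) ^ 2 * (2 + k) ≤ (2 * (a + 1 + k)) ^ 2 * (a + k) := by
  have h2a : 0 ≤ 2 - a := by linarith
  -- the cofactor of `2 - a` is concave in `a` and nonnegative at `a = 0` and `a = 2`
  have hcofactor : 0 ≤ -4 * a ^ 2 + (1 + k) * (k ^ 2 + 7 * k + 2) * a + 2 * k * (1 + k) ^ 2 := by
    nlinarith [mul_nonneg ha h2a, mul_nonneg ha (sub_nonneg.2 hk), mul_nonneg h2a (sub_nonneg.2 hk)]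
  have hfactor : (2 * (a + 1 + k)) ^ 2 * (a + k) - (a * (3 + k)) ^ 2 * (2 + k) =
      (2 - a) * (-4 * a ^ 2 + (1 + k) * (k ^ 2 + 7 * k + 2) * a + 2 * k * (1 + k) ^ 2) := by
    ring
  nlinarith [mul_nonneg h2a hcofactor]

theorem pow_mul_le_pow_mul_of_le_two {n : ℕ} (hn : 2 ≤ n) (hk : 1 ≤ k) (ha : 0 ≤ a)
    (ha2 : a ≤ 2) : (a * (3 + k)) ^ n * (2 + k) ≤ (2 * (a + 1 + k)) ^ n * (a + k) := by
  obtain ⟨m, rfl⟩ : ∃ m, n = m + 2 := ⟨n - 2, by omega⟩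
  have hr : 0 ≤ a * (3 + k) := by positivity
  have hrR : a * (3 + k) ≤ 2 * (a + 1 + k) := by nlinarith
  calc (a * (3 + k)) ^ (m + 2) * (2 + k)
      = (a * (3 + k)) ^ m * ((a * (3 + k)) ^ 2 * (2 + k)) := by ring
    _ ≤ (2 * (a + 1 + k)) ^ m * ((2 * (a + 1 + k)) ^ 2 * (a + k)) :=
        mul_le_mul (pow_le_pow_left₀ hr hrR m) (sq_mul_le_sq_mul_of_le_two hk ha ha2)
          (by positivity) (by positivity)
    _ = (2 * (a + 1 + k)) ^ (m + 2) * (a + k) := by ring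

theorem pow_div_le_of_le_two {n : ℕ} (hn : 2 ≤ n) (hk : 1 ≤ k) (ha : 0 ≤ a) (ha2 : a ≤ 2)
    (hb : 1 ≤ b) :
    a ^ n / ((a + k * b) * (a + (1 + k) * b) ^ n) ≤ 2 ^ n / ((2 + k) * (3 + k) ^ n) := by
  have hden : (a + k) * (a + 1 + k) ^ n ≤ (a + k * b) * (a + (1 + k) * b) ^ n :=
    mul_le_mul (by nlinarith) (pow_le_pow_left₀ (by positivity) (by nlinarith) n)
      (by positivity) (by nlinarith)
  have hden_pos : 0 < (a + k) * (a + 1 + k) ^ n := by positivity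
  rw [div_le_div_iff₀ (hden_pos.trans_le hden) (by positivity)]
  calc a ^ n * ((2 + k) * (3 + k) ^ n) = (a * (3 + k)) ^ n * (2 + k) := by rw [mul_pow]; ring
    _ ≤ (2 * (a + 1 + k)) ^ n * (a + k) := pow_mul_le_pow_mul_of_le_two hn hk ha ha2
    _ = 2 ^ n * ((a + k) * (a + 1 + k) ^ n) := by rw [mul_pow]; ring
    _ ≤ 2 ^ n * ((a + k * b) * (a + (1 + k) * b) ^ n) :=
        mul_le_mul_of_nonneg_left hden (by positivity)

end SimplexBound

/-- For integers k ≥ 1 and n ≥ 2, the function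
f(v) = (1+Σvᵢ)^n / ((1+Σvᵢ+k(1+Σ_{i≥2}vᵢ))·(1+Σvᵢ+(1+k)(1+Σ_{i≥2}vᵢ))^n)
on the standard simplex attains its maximum 2^n/((2+k)(3+k)^n) at (1,0,…,0). -/
theorem stmt_0 (n k : ℕ) (hn : 2 ≤ n) (hk : 1 ≤ k)
    (f : (Fin n → ℝ) → ℝ)
    (hf : ∀ v : Fin n → ℝ,
      f v = (1 + ∑ i, v i) ^ n /
        ((1 + ∑ i, v i + (k : ℝ) * (1 + ∑ i ∈ univ.filter (fun i : Fin n => i.val ≠ 0), v i)) *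
         (1 + ∑ i, v i + (1 + (k : ℝ)) * (1 + ∑ i ∈ univ.filter (fun i : Fin n => i.val ≠ 0), v i)) ^ n))
    (S : Set (Fin n → ℝ))
    (hS : S = {v : Fin n → ℝ | (∀ i, 0 ≤ v i) ∧ ∑ i, v i ≤ 1})
    (v₀ : Fin n → ℝ) (hv₀ : v₀ = fun i => if i.val = 0 then 1 else 0) :
    v₀ ∈ S ∧ f v₀ = 2 ^ n / ((2 + (k : ℝ)) * (3 + (k : ℝ)) ^ n) ∧
      ∀ v ∈ S, f v ≤ 2 ^ n / ((2 + (k : ℝ)) * (3 + (k : ℝ)) ^ n) := by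
  have : NeZero n := ⟨by omega⟩
  subst hS hv₀
  have hsum : ∑ i : Fin n, (if i.val = 0 then (1 : ℝ) else 0) = 1 := by
    simp [Fin.val_eq_zero_iff]
  have hsum_tail : ∑ i ∈ univ.filter (fun i : Fin n => i.val ≠ 0),
      (if i.val = 0 then (1 : ℝ) else 0) = 0 :=
    sum_eq_zero fun _ hi => if_neg (mem_filter.1 hi).2
  refine ⟨⟨fun i => by positivity, hsum.le⟩, ?_, ?_⟩
  · rw [hf, hsum, hsum_tail]
    ring
  · rintro v ⟨hv_nonneg, hv_sum⟩
    have htail : 0 ≤ ∑ i ∈ univ.filter (fun i : Fin n => i.val ≠ 0), v i :=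
      sum_nonneg fun i _ => hv_nonneg i
    have htail_le : ∑ i ∈ univ.filter (fun i : Fin n => i.val ≠ 0), v i ≤ ∑ i, v i :=
      sum_le_sum_of_subset_of_nonneg (filter_subset _ _) fun i _ _ => hv_nonneg i
    rw [hf]
    exact pow_div_le_of_le_two hn (by exact_mod_cast hk) (by linarith) (by linarith)
      (by linarith)
end

section
/- For every integer n ≥ 2, Σ_{k=0}^∞ 2ⁿ/((2+k)(3+k)ⁿ) < 2^{n-1}/3ⁿ + 2ⁿ·[ln(3/2) − Σ_{k=1}^{n-1} 1/(k·3ᵏ)]. -/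
/-!
Dividing by `2ⁿ`, the claim says `∑ₖ 1/((2+k)(3+k)ⁿ) < 1/(2·3ⁿ) + Tₙ`, where
`Tₙ = ∑_{k≥n} 1/(k·3ᵏ)` is the tail of `log (3/2) = ∑_{k≥1} 1/(k·3ᵏ)`. The terms `k = 0, 1`
on the left are `1/(2·3ⁿ)` and `1/(3·4ⁿ)`, and the rest is at most `5/(4·5ⁿ)` by comparison
with the telescoping series `∑ 1/((k+4)(k+5))`. On the right, termwise comparison gives
`Tₙ ≥ 18/(n·3ⁿ) · T₂`, and `T₂ > 17/240` from its first three terms; what remains,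
`1/(3·4ⁿ) + 5/(4·5ⁿ) ≤ 51/(40·n·3ⁿ)`, is an induction on `n`.
-/

open Real Finset Filter Topology

theorem hasSum_sub_succ_of_antitone {g : ℕ → ℝ} {l : ℝ} (hg : Antitone g)
    (hl : Tendsto g atTop (𝓝 l)) : HasSum (fun k => g k - g (k + 1)) (g 0 - l) := by
  rw [hasSum_iff_tendsto_nat_of_nonneg fun k => sub_nonneg.2 (hg k.le_succ)]
  simp_rw [sum_range_sub']
  exact tendsto_const_nhds.sub hl

theorem pow_mul_le_mul_pow {R : Type*} [CommSemiring R] [PartialOrder R] [IsOrderedRing R]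
    {a b : R} (hb : 0 ≤ b) (hba : b ≤ a) {n : ℕ} (hn : 1 ≤ n) :
    b ^ n * a ≤ b * a ^ n := by
  obtain ⟨m, rfl⟩ := Nat.exists_eq_add_of_le' hn
  have ha := hb.trans hba
  rw [pow_succ', pow_succ, mul_assoc]
  gcongr

theorem tsum_one_div_mul_pow_le (n : ℕ) (hn : 1 ≤ n) :
    ∑' k : ℕ, 1 / ((2 + (k : ℝ)) * (3 + k) ^ n) ≤
      1 / (2 * 3 ^ n) + 1 / (3 * 4 ^ n) + 5 / (4 * 5 ^ n) := by
  set u : ℕ → ℝ := fun k => 1 / ((2 + (k : ℝ)) * (3 + k) ^ n)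
  set g : ℕ → ℝ := fun k => 1 / ((k : ℝ) + 4)
  have htel : HasSum (fun k => g k - g (k + 1)) (1 / 4) := by
    have hg : Antitone g := fun i j hij => by
      simp only [g]; gcongr
    have hl : Tendsto g atTop (𝓝 0) := by
      simpa only [g, one_div, Pi.inv_def] using
        (tendsto_atTop_add_const_right atTop 4 tendsto_natCast_atTop_atTop).inv_tendsto_atTop
    simpa [g] using hasSum_sub_succ_of_antitone hg hl
  -- `(k + 5)^n ≥ 5^(n-1) (k + 5)` turns the tail into a telescoping sum
  have hterm : ∀ k, u (k + 2) ≤ 5 / 5 ^ n * (g k - g (k + 1)) := by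
    intro k
    have hpow :=
      pow_mul_le_mul_pow (by norm_num : (0 : ℝ) ≤ 5) (by linarith : (5 : ℝ) ≤ k + 5) hn
    have hg : g k - g (k + 1) = 1 / ((k + 4) * (k + 5)) := by
      simp only [g]
      push_cast
      field_simp
      ring
    simp only [u, hg]
    push_cast
    rw [show (2 : ℝ) + (k + 2) = k + 4 by ring, show (3 : ℝ) + (k + 2) = k + 5 by ring,
      mul_one_div, div_div, div_le_div_iff₀ (by positivity) (by positivity)]
    nlinarith [mul_le_mul_of_nonneg_left hpow (by positivity : (0 : ℝ) ≤ k + 4)]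
  have htail : Summable fun k => u (k + 2) :=
    (htel.summable.mul_left _).of_nonneg_of_le (fun k => by positivity) hterm
  rw [← ((summable_nat_add_iff 2).1 htail).sum_add_tsum_nat_add 2]
  have htail_le : ∑' k, u (k + 2) ≤ 5 / 5 ^ n * (1 / 4) :=
    hasSum_le hterm htail.hasSum (htel.mul_left _)
  have hhead : ∑ k ∈ range 2, u k = 1 / (2 * 3 ^ n) + 1 / (3 * 4 ^ n) := by
    norm_num [u, sum_range_succ]
  rw [hhead]
  linarith [show (5 : ℝ) / 5 ^ n * (1 / 4) = 5 / (4 * 5 ^ n) by ring]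

-- The `k = 0` term is `1 / 0 = 0`.
theorem hasSum_one_div_mul_three_pow :
    HasSum (fun k : ℕ => 1 / ((k : ℝ) * 3 ^ k)) (log (3 / 2)) := by
  have h := hasSum_pow_div_log_of_abs_lt_one (x := (1 / 3 : ℝ)) (by norm_num [abs_of_pos])
  rw [show (1 : ℝ) - 1 / 3 = (3 / 2)⁻¹ by norm_num, log_inv, neg_neg] at h
  have h' : HasSum (fun k : ℕ => 1 / (((k + 1 : ℕ) : ℝ) * 3 ^ (k + 1))) (log (3 / 2)) := by
    convert h using 2 with k
    rw [div_pow, one_pow, div_div, mul_comm, Nat.cast_succ]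
  exact (hasSum_nat_add_iff' 1).1 (by simpa using h')

noncomputable def logTail (n : ℕ) : ℝ := ∑' i : ℕ, 1 / (((i + n : ℕ) : ℝ) * 3 ^ (i + n))

theorem hasSum_logTail (n : ℕ) :
    HasSum (fun i : ℕ => 1 / (((i + n : ℕ) : ℝ) * 3 ^ (i + n)))
      (log (3 / 2) - ∑ k ∈ range n, 1 / ((k : ℝ) * 3 ^ k)) :=
  (hasSum_nat_add_iff' n).2 hasSum_one_div_mul_three_pow

theorem log_three_halves_sub_sum_eq_logTail (n : ℕ) :
    log (3 / 2) - ∑ k ∈ Icc 1 (n - 1), 1 / ((k : ℝ) * 3 ^ k) = logTail n := by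
  rw [logTail, (hasSum_logTail n).tsum_eq]
  congr 1
  refine sum_subset (fun k hk => ?_) (fun k hk hk' => ?_)
  · simp only [mem_Icc, mem_range] at hk ⊢; omega
  · obtain rfl : k = 0 := by simp only [mem_Icc, mem_range] at hk hk'; omega
    simp

theorem lt_logTail_two : 17 / 240 < logTail 2 := by
  have h := (hasSum_logTail 2).summable.sum_le_tsum (range 3) fun i _ => by positivity
  rw [logTail]
  norm_num [sum_range_succ] at h ⊢
  linarith

theorem mul_logTail_two_le {n : ℕ} (hn : 2 ≤ n) :
    18 / (n * 3 ^ n) * logTail 2 ≤ logTail n := by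
  rw [logTail, logTail, ← tsum_mul_left]
  refine ((hasSum_logTail 2).mul_left _).summable.tsum_le_tsum (fun i => ?_)
    (hasSum_logTail n).summable
  have hn' : (2 : ℝ) ≤ n := by exact_mod_cast hn
  have hcoef : 2 * ((i : ℝ) + n) ≤ n * (i + 2) := by nlinarith [i.cast_nonneg (α := ℝ)]
  rw [div_mul_div_comm, div_le_div_iff₀ (by positivity) (by positivity), pow_add, pow_add]
  push_cast
  nlinarith [mul_le_mul_of_nonneg_right hcoef (by positivity : (0 : ℝ) ≤ 3 ^ i * 3 ^ n)]

theorem forty_mul_fifteen_pow_add_le {n : ℕ} (hn : 2 ≤ n) :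
    40 * n * 15 ^ n + 150 * n * 12 ^ n ≤ 153 * 20 ^ n := by
  -- equality holds at `n = 2`, so the induction starts at `n = 3`
  obtain rfl | h3 := hn.eq_or_lt
  · norm_num
  clear hn
  induction n, h3 using Nat.le_induction with
  | base => norm_num
  | succ n hn ih =>
    calc 40 * (n + 1) * 15 ^ (n + 1) + 150 * (n + 1) * 12 ^ (n + 1)
        = 15 * (n + 1) * (40 * 15 ^ n) + 12 * (n + 1) * (150 * 12 ^ n) := by ring
      _ ≤ 20 * n * (40 * 15 ^ n) + 20 * n * (150 * 12 ^ n) :=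
          Nat.add_le_add (Nat.mul_le_mul_right _ (by omega)) (Nat.mul_le_mul_right _ (by omega))
      _ = 20 * (40 * n * 15 ^ n + 150 * n * 12 ^ n) := by ring
      _ ≤ 20 * (153 * 20 ^ n) := by gcongr
      _ = 153 * 20 ^ (n + 1) := by ring

theorem one_div_three_mul_four_pow_add_lt_logTail {n : ℕ} (hn : 2 ≤ n) :
    1 / (3 * 4 ^ n) + 5 / (4 * 5 ^ n) < logTail n := by
  have key : (40 * n * 15 ^ n + 150 * n * 12 ^ n : ℝ) ≤ 153 * 20 ^ n := by
    exact_mod_cast forty_mul_fifteen_pow_add_le hn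
  have hn' : (0 : ℝ) < n := by positivity
  calc 1 / (3 * 4 ^ n) + 5 / (4 * 5 ^ n)
      ≤ 18 / (n * 3 ^ n) * (17 / 240 : ℝ) := by
        rw [show (15 : ℝ) ^ n = 3 ^ n * 5 ^ n by rw [← mul_pow]; norm_num,
          show (12 : ℝ) ^ n = 3 ^ n * 4 ^ n by rw [← mul_pow]; norm_num,
          show (20 : ℝ) ^ n = 4 ^ n * 5 ^ n by rw [← mul_pow]; norm_num] at key
        rw [div_add_div _ _ (by positivity) (by positivity), div_mul_eq_mul_div,
          div_le_div_iff₀ (by positivity) (by positivity)]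
        nlinarith [key]
    _ < 18 / (n * 3 ^ n) * logTail 2 := by gcongr; exact lt_logTail_two
    _ ≤ logTail n := mul_logTail_two_le hn

/-- For every integer n ≥ 2,
Σ_{k=0}^∞ 2ⁿ/((2+k)(3+k)ⁿ) < 2^{n−1}/3ⁿ + 2ⁿ·(ln(3/2) − Σ_{k=1}^{n−1} 1/(k·3ᵏ)). -/
theorem stmt_4 (n : ℕ) (hn : 2 ≤ n) :
    (∑' k : ℕ, (2 : ℝ) ^ n / ((2 + (k : ℝ)) * (3 + (k : ℝ)) ^ n)) <
      (2 : ℝ) ^ (n - 1) / 3 ^ n +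
        2 ^ n * (Real.log (3 / 2) - ∑ k ∈ Finset.Icc 1 (n - 1), 1 / ((k : ℝ) * 3 ^ k)) := by
  have hsum := tsum_one_div_mul_pow_le n (by omega)
  have htail := one_div_three_mul_four_pow_add_lt_logTail hn
  have hhalf : (2 : ℝ) ^ (n - 1) / 3 ^ n = 2 ^ n * (1 / (2 * 3 ^ n)) := by
    obtain ⟨m, rfl⟩ := Nat.exists_eq_add_of_le' (by omega : 1 ≤ n)
    rw [Nat.add_sub_cancel]
    field_simp
    ring
  simp_rw [div_eq_mul_one_div ((2 : ℝ) ^ n)]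
  rw [tsum_mul_left, log_three_halves_sub_sum_eq_logTail, hhalf, ← mul_add]
  gcongr
  linarith
end

section
/- Let n ≥ 2 and let W = (w₁,…,w_{n+1}) ∈ ℝ^{n+1} have nonnegative components satisfying Σ_{j ∉ {j₁,j₂}} w_j ≤ (n−1)(w_{j₁} + w_{j₂}) for all pairs of distinct indices j₁ ≠ j₂. Then for every index i, the vector W_i defined by (W_i)_j = w_j + w_i for j ≠ i and (W_i)_i = w_i also has nonnegative components and satisfies the same family of inequalities. -/
/-!
Adding `w i` to every coordinate other than `i` raises the left-hand side of the inequality for a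
pair `{j₁, j₂}` by `w i` times the number of summation indices other than `i`, and raises the
right-hand side by `c * w i` if `i ∈ {j₁, j₂}` and by `2 * c * w i` otherwise. There are
`card ι - 2 ≤ c` summation indices, so the inequality survives in both cases.
-/

open Finset

variable {ι M : Type*} [DecidableEq ι]

/-- The vector `W_i` of the paper. -/
def addToOthers [Add M] (W : ι → M) (i : ι) : ι → M :=
  fun j => if j = i then W i else W j + W i

@[simp]
theorem addToOthers_self [Add M] (W : ι → M) (i : ι) : addToOthers W i i = W i :=
  if_pos rfl

theorem addToOthers_of_ne [Add M] (W : ι → M) {i j : ι} (h : j ≠ i) :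
    addToOthers W i j = W j + W i :=
  if_neg h

theorem addToOthers_nonneg [AddZeroClass M] [Preorder M] [AddLeftMono M] {W : ι → M}
    (hW : ∀ j, 0 ≤ W j) (i j : ι) : 0 ≤ addToOthers W i j := by
  unfold addToOthers
  split_ifs
  · exact hW i
  · exact add_nonneg (hW j) (hW i)

theorem sum_addToOthers [AddCommMonoid M] (W : ι → M) (i : ι) (s : Finset ι) :
    ∑ j ∈ s, addToOthers W i j = ∑ j ∈ s, W j + #(s.erase i) • W i := by
  have hsplit : ∀ j, addToOthers W i j = W j + if j = i then 0 else W i := by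
    intro j
    by_cases h : j = i
    · simp [h]
    · simp [addToOthers_of_ne W h, h]
  simp only [hsplit, sum_add_distrib, sum_ite, sum_const_zero, zero_add, sum_const,
    filter_ne']

section PairInequalities

variable [Fintype ι]

def PairDominated (c : ℝ) (W : ι → ℝ) : Prop :=
  ∀ j₁ j₂ : ι, j₁ ≠ j₂ → ∑ j ∈ univ \ {j₁, j₂}, W j ≤ c * (W j₁ + W j₂)

theorem card_compl_pair {j₁ j₂ : ι} (h : j₁ ≠ j₂) :
    (#(univ \ {j₁, j₂}) : ℝ) = Fintype.card ι - 2 := by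
  rw [card_sdiff_of_subset (subset_univ _), card_univ, card_pair h,
    Nat.cast_sub (by simpa [card_pair h] using card_le_univ {j₁, j₂})]
  norm_num

theorem PairDominated.addToOthers {c : ℝ} {W : ι → ℝ} (hW : ∀ j, 0 ≤ W j)
    (hc : (Fintype.card ι : ℝ) - 2 ≤ c) (h : PairDominated c W) (i : ι) :
    PairDominated c (addToOthers W i) := by
  intro j₁ j₂ hne
  have hS := card_compl_pair hne
  have hwi := hW i
  have hW12 := h j₁ j₂ hne
  rw [sum_addToOthers, nsmul_eq_mul]
  by_cases hi : i ∈ univ \ {j₁, j₂}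
  · obtain ⟨hi₁, hi₂⟩ : i ≠ j₁ ∧ i ≠ j₂ := by simpa using hi
    have hcard : (#((univ \ {j₁, j₂}).erase i) : ℝ) = #(univ \ {j₁, j₂}) - 1 := by
      rw [card_erase_of_mem hi, Nat.cast_sub (card_pos.mpr ⟨i, hi⟩), Nat.cast_one]
    rw [hcard, addToOthers_of_ne W hi₁.symm, addToOthers_of_ne W hi₂.symm]
    nlinarith
  · rw [erase_eq_of_notMem hi]
    obtain rfl | rfl : i = j₁ ∨ i = j₂ := by simpa [or_iff_not_imp_left] using hi
    · rw [addToOthers_self, addToOthers_of_ne W hne.symm]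
      nlinarith
    · rw [addToOthers_self, addToOthers_of_ne W hne]
      nlinarith

end PairInequalities

theorem stmt_11_general (n : ℕ) (W : Fin (n + 1) → ℝ)
    (hpos : ∀ j, 0 ≤ W j)
    (hineq : ∀ j₁ j₂ : Fin (n + 1), j₁ ≠ j₂ →
      ∑ j ∈ univ \ {j₁, j₂}, W j ≤ ((n : ℝ) - 1) * (W j₁ + W j₂))
    (i : Fin (n + 1)) (Wi : Fin (n + 1) → ℝ)
    (hWi : ∀ j, Wi j = if j = i then W i else W j + W i) :
    (∀ j, 0 ≤ Wi j) ∧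
      ∀ j₁ j₂ : Fin (n + 1), j₁ ≠ j₂ →
        ∑ j ∈ univ \ {j₁, j₂}, Wi j ≤ ((n : ℝ) - 1) * (Wi j₁ + Wi j₂) := by
  obtain rfl : Wi = addToOthers W i := funext hWi
  have hc : (Fintype.card (Fin (n + 1)) : ℝ) - 2 ≤ n - 1 := by
    rw [Fintype.card_fin, Nat.cast_succ]
    linarith
  exact ⟨addToOthers_nonneg hpos i, PairDominated.addToOthers hpos hc hineq i⟩

/-- Let n ≥ 2 and W ∈ ℝ^{n+1} with nonnegative components satisfying
Σ_{j∉{j₁,j₂}} w_j ≤ (n−1)(w_{j₁}+w_{j₂}) for all pairs j₁ ≠ j₂. Then for each i the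
vector W_i, with (W_i)_j = w_j + w_i for j ≠ i and (W_i)_i = w_i, has nonnegative
components and satisfies the same inequalities. -/
theorem stmt_11 (n : ℕ) (hn : 2 ≤ n) (W : Fin (n + 1) → ℝ)
    (hpos : ∀ j, 0 ≤ W j)
    (hineq : ∀ j₁ j₂ : Fin (n + 1), j₁ ≠ j₂ →
      ∑ j ∈ univ \ {j₁, j₂}, W j ≤ ((n : ℝ) - 1) * (W j₁ + W j₂))
    (i : Fin (n + 1)) (Wi : Fin (n + 1) → ℝ)
    (hWi : ∀ j, Wi j = if j = i then W i else W j + W i) :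
    (∀ j, 0 ≤ Wi j) ∧
      ∀ j₁ j₂ : Fin (n + 1), j₁ ≠ j₂ →
        ∑ j ∈ univ \ {j₁, j₂}, Wi j ≤ ((n : ℝ) - 1) * (Wi j₁ + Wi j₂) :=
  stmt_11_general n W hpos hineq i Wi hWi
end

section
/- Let α be the unique real root greater than 1 of x^{n+1} = x^n + ⋯ + x + 1 (the (n+1)-bonacci constant). Then 1 < α < 2, α is the unique root of this equation with |root| maximal among all complex roots, and all other complex roots have modulus strictly less than α. -/
/-!
Dividing by `x ^ (n + 1)`, a positive real `x` is a root of `x ^ (n + 1) = ∑_{i ≤ n} x ^ i` exactly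
when `∑_{k=1}^{n+1} x⁻¹ ^ k = 1`, and this sum is strictly decreasing on `(0, ∞)`. This gives
uniqueness of the positive root `α`, and the intermediate value theorem on `[1, 2]` gives its
existence. A complex root `z` satisfies `‖z‖ ^ (n + 1) ≤ ∑_{i ≤ n} ‖z‖ ^ i` by the triangle
inequality, hence `‖z‖ ≤ α`; if `‖z‖ = α` the triangle inequality is an equality, which forces
`‖1 + z‖ = 1 + ‖z‖`, so `z` is a nonnegative real and `z = α`.
-/

open Finset

namespace Complex

theorem ofReal_norm_eq_of_norm_one_add_eq {z : ℂ} (h : ‖1 + z‖ = 1 + ‖z‖) : (‖z‖ : ℂ) = z := by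
  rcases (norm_add_eq_iff (x := 1) (y := z)).mp (by simpa using h) with h1 | rfl | harg
  · exact absurd h1 one_ne_zero
  · simp
  · rw [arg_one] at harg
    simpa [← harg] using norm_mul_exp_arg_mul_I z

theorem ofReal_norm_eq_of_sum_norm_pow_le {z : ℂ} {n : ℕ} (hn : 2 ≤ n)
    (h : ∑ i ∈ range n, ‖z‖ ^ i ≤ ‖∑ i ∈ range n, z ^ i‖) : (‖z‖ : ℂ) = z := by
  rw [← sum_range_add_sum_Ico _ hn, ← sum_range_add_sum_Ico _ hn] at h
  simp only [sum_range_succ, sum_range_zero, zero_add, pow_zero, pow_one] at h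
  refine ofReal_norm_eq_of_norm_one_add_eq (le_antisymm (norm_add_le_of_le norm_one.le le_rfl) ?_)
  have htail : ‖∑ i ∈ Ico 2 n, z ^ i‖ ≤ ∑ i ∈ Ico 2 n, ‖z‖ ^ i :=
    (norm_sum_le _ _).trans_eq (by simp only [norm_pow])
  linarith [norm_add_le (1 + z) (∑ i ∈ Ico 2 n, z ^ i)]

end Complex

noncomputable def invPowSum (n : ℕ) (x : ℝ) : ℝ := ∑ i ∈ range (n + 1), x⁻¹ ^ (i + 1)

section invPowSum

variable {n : ℕ} {x : ℝ}

theorem pow_mul_invPowSum (hx : x ≠ 0) :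
    x ^ (n + 1) * invPowSum n x = ∑ i ∈ range (n + 1), x ^ i := by
  rw [invPowSum, mul_sum, ← sum_range_reflect (x ^ ·)]
  refine sum_congr rfl fun i hi => ?_
  rw [inv_pow, ← pow_sub₀ x hx (mem_range.mp hi : i + 1 ≤ n + 1)]
  congr 1
  omega

theorem invPowSum_strictAntiOn : StrictAntiOn (invPowSum n) (Set.Ioi 0) := by
  intro a ha b _ hab
  refine sum_lt_sum_of_nonempty nonempty_range_add_one fun i _ => ?_
  exact pow_lt_pow_left₀ (inv_strictAnti₀ ha hab) (inv_pos.2 (ha.trans hab)).le i.succ_ne_zero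

theorem pow_le_sum_pow_iff (hx : 0 < x) :
    x ^ (n + 1) ≤ ∑ i ∈ range (n + 1), x ^ i ↔ 1 ≤ invPowSum n x := by
  rw [← pow_mul_invPowSum hx.ne', le_mul_iff_one_le_right (by positivity)]

theorem pow_eq_sum_pow_iff (hx : 0 < x) :
    x ^ (n + 1) = ∑ i ∈ range (n + 1), x ^ i ↔ invPowSum n x = 1 := by
  rw [← pow_mul_invPowSum hx.ne', eq_comm, mul_eq_left₀ (by positivity)]

end invPowSum

section BonacciRoot

variable {n : ℕ} {α : ℝ}

theorem exists_pow_eq_sum_pow_mem_Ioo (hn : 1 ≤ n) :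
    ∃ α ∈ Set.Ioo (1 : ℝ) 2, α ^ (n + 1) = ∑ i ∈ range (n + 1), α ^ i := by
  set f : ℝ → ℝ := fun x => x ^ (n + 1) - ∑ i ∈ range (n + 1), x ^ i
  have hf : ContinuousOn f (Set.Icc 1 2) := by fun_prop
  have hf1 : f 1 < 0 := by
    have : (1 : ℝ) ≤ n := by exact_mod_cast hn
    simp only [f, one_pow, sum_const, card_range, nsmul_eq_mul, mul_one]
    push_cast
    linarith
  have hf2 : 0 < f 2 := by
    norm_num [f, geom_sum_eq (by norm_num : (2 : ℝ) ≠ 1)]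
  obtain ⟨α, hα, hfα⟩ := intermediate_value_Ioo (by norm_num) hf ⟨hf1, hf2⟩
  exact ⟨α, hα, sub_eq_zero.mp hfα⟩

theorem eq_of_pow_eq_sum_pow {β : ℝ} (hα : 0 < α) (hβ : 0 < β)
    (hαroot : α ^ (n + 1) = ∑ i ∈ range (n + 1), α ^ i)
    (hβroot : β ^ (n + 1) = ∑ i ∈ range (n + 1), β ^ i) : β = α :=
  invPowSum_strictAntiOn.injOn hβ hα <|
    ((pow_eq_sum_pow_iff hβ).mp hβroot).trans ((pow_eq_sum_pow_iff hα).mp hαroot).symm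

theorem le_of_pow_le_sum_pow {r : ℝ} (hα : 0 < α)
    (hαroot : α ^ (n + 1) = ∑ i ∈ range (n + 1), α ^ i)
    (hr : r ^ (n + 1) ≤ ∑ i ∈ range (n + 1), r ^ i) : r ≤ α := by
  by_contra! hαr
  have hr0 : 0 < r := hα.trans hαr
  have := invPowSum_strictAntiOn (n := n) hα hr0 hαr
  rw [(pow_eq_sum_pow_iff hα).mp hαroot] at this
  exact this.not_ge ((pow_le_sum_pow_iff hr0).mp hr)

end BonacciRoot

/-- For n ≥ 1 there is a unique real root α > 1 of
x^{n+1} = xⁿ + ⋯ + x + 1 (the (n+1)-bonacci constant); it satisfies 1 < α < 2 and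
every other complex root has modulus strictly less than α, so α is the unique
root of maximal modulus. -/
theorem stmt_13 (n : ℕ) (hn : 1 ≤ n) :
    ∃ α : ℝ,
      (1 < α ∧ α < 2 ∧ α ^ (n + 1) = ∑ i ∈ Finset.range (n + 1), α ^ i) ∧
      (∀ β : ℝ, 1 < β → β ^ (n + 1) = ∑ i ∈ Finset.range (n + 1), β ^ i → β = α) ∧
      (∀ z : ℂ, z ^ (n + 1) = ∑ i ∈ Finset.range (n + 1), z ^ i → z ≠ (α : ℂ) →
        ‖z‖ < α) := by
  obtain ⟨α, ⟨hα1, hα2⟩, hα⟩ := exists_pow_eq_sum_pow_mem_Ioo hn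
  have hα0 : 0 < α := one_pos.trans hα1
  refine ⟨α, ⟨hα1, hα2, hα⟩,
    fun β hβ hβroot => eq_of_pow_eq_sum_pow hα0 (one_pos.trans hβ) hα hβroot, fun z hz hzα => ?_⟩
  have hnorm : ‖z‖ ^ (n + 1) = ‖∑ i ∈ range (n + 1), z ^ i‖ := by rw [← norm_pow, hz]
  have hle : ‖z‖ ≤ α := le_of_pow_le_sum_pow hα0 hα <| hnorm.trans_le <|
    (norm_sum_le _ _).trans_eq (by simp only [norm_pow])
  refine hle.lt_of_ne fun hzα' => hzα ?_
  have hzreal : (‖z‖ : ℂ) = z :=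
    Complex.ofReal_norm_eq_of_sum_norm_pow_le (n := n + 1) (by omega) (by rw [← hnorm, hzα', hα])
  rw [← hzreal, hzα']
end
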